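/- arXiv:0806.3088 — 7 statements merged into one kernel-verified Lean document; each statement's English description precedes it below -/
import Mathlib

section
/- Let a ∈ (0,1) and t ∈ ℝ, and set z = e^{it}. Then Im( z(1−az)/(z−a) ) = 2a·sin t·(a·cos t − 1)/(1 − 2a·cos t + a²). In particular, for every t ∈ (0,π) one has Im( z(1−az)/(z−a) ) < 0. -/
/-!
On the unit circle `z * conj z = 1`, so multiplying numerator and denominator by `conj (z - a)`
turns `z (1 - a z) / (z - a)` into `(1 - a z)² / |z - a|²`. For `z = e^{it}` the imaginary part
of `(1 - a z)²` is `-2a sin t + a² sin 2t = 2a sin t (a cos t - 1)`, which is negative on `(0, π)`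
when `0 < a < 1`, while `|z - a|² = (a - cos t)² + sin² t` is positive there.
-/

open Complex ComplexConjugate

namespace Complex

theorem mul_one_sub_mul_div_sub_of_normSq_eq_one {z : ℂ} (hz : normSq z = 1) (a : ℝ) :
    z * (1 - a * z) / (z - a) = (1 - a * z) ^ 2 / (normSq (z - a) : ℂ) := by
  have hconj : z * conj (z - a) = 1 - a * z := by
    rw [map_sub, conj_ofReal, mul_sub, mul_conj, hz, ofReal_one, mul_comm]
  calc z * (1 - a * z) / (z - a) = (1 - a * z) * (z * conj (z - a)) / (normSq (z - a) : ℂ) := by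
        rw [div_eq_mul_inv, inv_def, ofReal_inv]; ring
    _ = (1 - a * z) ^ 2 / (normSq (z - a) : ℂ) := by rw [hconj, sq]

theorem normSq_exp_I_mul_sub_ofReal (a t : ℝ) :
    normSq (exp (I * t) - a) = 1 - 2 * a * Real.cos t + a ^ 2 := by
  rw [mul_comm, exp_mul_I, ← ofReal_cos, ← ofReal_sin, normSq_apply]
  simp only [sub_re, add_re, sub_im, add_im, ofReal_re, ofReal_im, mul_re, mul_im, I_re, I_im]
  nlinarith [Real.sin_sq_add_cos_sq t]

theorem im_one_sub_mul_exp_I_mul_sq (a t : ℝ) :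
    ((1 - a * exp (I * t)) ^ 2).im = 2 * a * Real.sin t * (a * Real.cos t - 1) := by
  rw [mul_comm I, exp_mul_I, ← ofReal_cos, ← ofReal_sin]
  simp only [sq, mul_im, mul_re, sub_re, sub_im, add_re, add_im, one_re, one_im, ofReal_re,
    ofReal_im, I_re, I_im]
  ring

end Complex

theorem one_sub_two_mul_mul_cos_add_sq (a t : ℝ) :
    1 - 2 * a * Real.cos t + a ^ 2 = (a - Real.cos t) ^ 2 + Real.sin t ^ 2 := by
  nlinarith [Real.sin_sq_add_cos_sq t]

theorem stmt_3 (a : ℝ) (ha : a ∈ Set.Ioo (0:ℝ) 1) (t : ℝ) :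
    (Complex.exp (Complex.I * t) * (1 - a * Complex.exp (Complex.I * t)) /
        (Complex.exp (Complex.I * t) - a)).im
      = 2 * a * Real.sin t * (a * Real.cos t - 1) / (1 - 2 * a * Real.cos t + a^2) ∧
    (t ∈ Set.Ioo 0 Real.pi →
      (Complex.exp (Complex.I * t) * (1 - a * Complex.exp (Complex.I * t)) /
        (Complex.exp (Complex.I * t) - a)).im < 0) := by
  have hz : normSq (exp (I * t)) = 1 := by
    rw [normSq_eq_norm_sq, mul_comm, norm_exp_ofReal_mul_I, one_pow]
  have key : (exp (I * t) * (1 - a * exp (I * t)) / (exp (I * t) - a)).im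
      = 2 * a * Real.sin t * (a * Real.cos t - 1) / (1 - 2 * a * Real.cos t + a ^ 2) := by
    rw [mul_one_sub_mul_div_sub_of_normSq_eq_one hz, div_ofReal_im,
      im_one_sub_mul_exp_I_mul_sq, normSq_exp_I_mul_sub_ofReal]
  refine ⟨key, fun ⟨ht0, htpi⟩ => ?_⟩
  obtain ⟨ha0, ha1⟩ := ha
  have hsin : 0 < Real.sin t := Real.sin_pos_of_pos_of_lt_pi ht0 htpi
  have hac : a * Real.cos t < 1 :=
    (mul_le_of_le_one_right ha0.le (Real.cos_le_one t)).trans_lt ha1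
  rw [key, one_sub_two_mul_mul_cos_add_sq]
  apply div_neg_of_neg_of_pos
  · nlinarith [mul_pos ha0 hsin]
  · positivity
end

section
/- Let a ∈ (0,1) and define f : ℝ → ℝ by f(t) = Im( e^{3it}(1−a e^{it})/(e^{it}−a) ). Then f has derivative 2(1−2a)/(1−a) at t = 0 and derivative 2(1+2a)/(1+a) at t = π. In particular, if a < 1/2 then both derivatives are positive. -/
open Complex

/-
Writing z = e^{it}, the function is Im g(z) with g(z) = z³(1 - az)/(z - a), so by the chain rule its
derivative at t is Im(g'(z) · iz) = Re(z g'(z)). For real a, g is real on the real axis, and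
g'(1) = 3 - (1 + a)/(1 - a), -g'(-1) = 3 - (1 - a)/(1 + a).
-/

lemma hasDerivAt_im_comp_exp_mul_I {g : ℂ → ℂ} {g' : ℂ} {t : ℝ}
    (hg : HasDerivAt g g' (exp (I * t))) :
    HasDerivAt (fun s : ℝ => (g (exp (I * s))).im) (g' * exp (I * t)).re t := by
  have hexp : HasDerivAt (fun s : ℝ => exp (I * s)) (exp (I * t) * I) t := by
    simpa using (((hasDerivAt_id t).ofReal_comp).const_mul I).cexp
  refine (imCLM.hasFDerivAt.comp_hasDerivAt t (hg.comp t hexp)).congr_deriv ?_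
  rw [imCLM_apply, ← mul_assoc, mul_I_im]

lemma hasDerivAt_pow_three_mul_div (a : ℂ) {z : ℂ} (hz : z ≠ a) :
    HasDerivAt (fun w => w ^ 3 * (1 - a * w) / (w - a))
      (3 * z ^ 2 * (1 - a * z) / (z - a) + z ^ 3 * (a ^ 2 - 1) / (z - a) ^ 2) z := by
  have hza : z - a ≠ 0 := sub_ne_zero.mpr hz
  have hnum : HasDerivAt (fun w => w ^ 3 * (1 - a * w)) (3 * z ^ 2 * (1 - a * z) - z ^ 3 * a) z :=
    ((hasDerivAt_pow 3 z).mul (((hasDerivAt_id z).const_mul a).const_sub 1)).congr_deriv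
      (by simp only [Nat.cast_ofNat, Nat.add_one_sub_one, id_eq, mul_one, mul_neg]; ring)
  refine (hnum.div ((hasDerivAt_id z).sub_const a) hza).congr_deriv ?_
  simp only [id]
  field_simp
  ring

lemma exp_three_mul_I_mul (t : ℝ) : exp (3 * I * t) = exp (I * t) ^ 3 := by
  rw [← Complex.exp_nat_mul]
  push_cast
  ring_nf

lemma hasDerivAt_im_pow_three_mul_div_exp (a : ℂ) {t : ℝ} {z : ℂ} (ht : exp (I * t) = z)
    (hz : z ≠ a) :
    HasDerivAt (fun s : ℝ => (exp (I * s) ^ 3 * (1 - a * exp (I * s)) / (exp (I * s) - a)).im)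
      ((3 * z ^ 2 * (1 - a * z) / (z - a) + z ^ 3 * (a ^ 2 - 1) / (z - a) ^ 2) * z).re t := by
  subst ht
  exact hasDerivAt_im_comp_exp_mul_I (hasDerivAt_pow_three_mul_div a hz)

theorem stmt_8 (a : ℝ) (ha : a ∈ Set.Ioo (0:ℝ) 1) :
    HasDerivAt (fun t : ℝ =>
        (Complex.exp (3 * Complex.I * t) * (1 - a * Complex.exp (Complex.I * t)) /
          (Complex.exp (Complex.I * t) - a)).im)
      (2 * (1 - 2*a)/(1 - a)) 0 ∧
    HasDerivAt (fun t : ℝ =>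
        (Complex.exp (3 * Complex.I * t) * (1 - a * Complex.exp (Complex.I * t)) /
          (Complex.exp (Complex.I * t) - a)).im)
      (2 * (1 + 2*a)/(1 + a)) Real.pi ∧
    (a < 1/2 → 0 < 2 * (1 - 2*a)/(1 - a) ∧ 0 < 2 * (1 + 2*a)/(1 + a)) := by
  obtain ⟨ha0, ha1⟩ := ha
  have h1a : (1 : ℂ) - a ≠ 0 := by exact_mod_cast (sub_pos.mpr ha1).ne'
  have h1a' : (1 : ℂ) + a ≠ 0 := by exact_mod_cast (by linarith : (0 : ℝ) < 1 + a).ne'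
  simp only [exp_three_mul_I_mul]
  refine ⟨?_, ?_, fun h => ⟨by apply div_pos <;> linarith, by apply div_pos <;> linarith⟩⟩
  · have hval : (3 * 1 ^ 2 * (1 - a * 1) / (1 - a) + 1 ^ 3 * (a ^ 2 - 1) / (1 - a) ^ 2) * 1
        = ((2 * (1 - 2 * a) / (1 - a) : ℝ) : ℂ) := by
      push_cast
      field_simp
      ring
    have hderiv := hasDerivAt_im_pow_three_mul_div_exp (a : ℂ) (t := 0) (z := 1) (by simp)
      (by exact_mod_cast ha1.ne')
    rwa [hval, ofReal_re] at hderiv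
  · have hval : (3 * (-1) ^ 2 * (1 - a * -1) / (-1 - a) + (-1) ^ 3 * (a ^ 2 - 1) / (-1 - a) ^ 2) * -1
        = ((2 * (1 + 2 * a) / (1 + a) : ℝ) : ℂ) := by
      rw [show (-1 : ℂ) - a = -(1 + a) by ring]
      push_cast
      field_simp
      ring
    have hderiv := hasDerivAt_im_pow_three_mul_div_exp (a : ℂ) (t := Real.pi) (z := -1)
      (by rw [mul_comm]; exact exp_pi_mul_I) (by exact_mod_cast (by linarith : (-1 : ℝ) < a).ne)
    rwa [hval, ofReal_re] at hderiv
end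

section
/- Fix t ∈ (0,π). Then the function x ↦ arg( (e^{it} + x)/(x e^{it} + 1) ) is strictly decreasing on the interval (0,1), where arg denotes the principal argument. -/
/-!
Write `z = e^{it}`, which lies in the open upper half plane. For `x > 0` we have
`x z + 1 = x (z + 1/x)`, and both `z + x` and `z + 1/x` lie in the upper half plane, so
`arg ((z + x) / (x z + 1)) = arg (z + x) - arg (z + 1/x)`. Translating a point of the upper half
plane to the right strictly decreases its argument; as `x` grows, `z + x` moves right and
`z + 1/x` moves left, so the difference strictly decreases.
-/

open Complex Set

namespace Complex

/-- `sin (arg w₁ - arg w₂)` is a positive multiple of `w₂.re * w₁.im - w₁.re * w₂.im`, and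
`arg w₁ - arg w₂ > -π`. -/
theorem arg_lt_arg_of_re_mul_im_lt {w₁ w₂ : ℂ} (h₁ : 0 ≤ w₁.im)
    (h : w₁.re * w₂.im < w₂.re * w₁.im) : arg w₂ < arg w₁ := by
  have hw₁ : w₁ ≠ 0 := by rintro rfl; simp at h
  have hw₂ : w₂ ≠ 0 := by rintro rfl; simp at h
  have hsin : 0 < Real.sin (arg w₁ - arg w₂) := by
    rw [Real.sin_sub, sin_arg, cos_arg hw₁, sin_arg, cos_arg hw₂,
      show w₁.im / ‖w₁‖ * (w₂.re / ‖w₂‖) - w₁.re / ‖w₁‖ * (w₂.im / ‖w₂‖)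
        = (w₂.re * w₁.im - w₁.re * w₂.im) / (‖w₁‖ * ‖w₂‖) by ring]
    exact div_pos (sub_pos.2 h) (by positivity)
  by_contra! hle
  have := Real.sin_nonpos_of_nonpos_of_neg_pi_le (sub_nonpos.2 hle)
    (by linarith [arg_nonneg_iff.2 h₁, arg_le_pi w₂])
  linarith

theorem strictAnti_arg_add_ofReal {z : ℂ} (hz : 0 < z.im) :
    StrictAnti fun u : ℝ => arg (z + u) := by
  intro u v huv
  apply arg_lt_arg_of_re_mul_im_lt (by simpa using hz.le)
  simp only [add_re, add_im, ofReal_re, ofReal_im, add_zero]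
  nlinarith

theorem arg_div_of_im_pos {x y : ℂ} (hx : 0 < x.im) (hy : 0 < y.im) :
    arg (x / y) = arg x - arg y := by
  have hx₀ : x ≠ 0 := by rintro rfl; simp at hx
  have hy₀ : y ≠ 0 := by rintro rfl; simp at hy
  rw [← arg_coe_angle_toReal_eq_arg, arg_div_coe_angle hx₀ hy₀, ← Real.Angle.coe_sub,
    Real.Angle.toReal_coe_eq_self_iff_mem_Ioc]
  constructor <;> linarith [arg_nonneg_iff.2 hx.le, arg_nonneg_iff.2 hy.le,
    arg_le_pi x, arg_le_pi y, arg_lt_pi_iff.2 (Or.inr hy.ne')]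

theorem arg_add_ofReal_div_ofReal_mul_add_one {z : ℂ} (hz : 0 < z.im) {x : ℝ} (hx : 0 < x) :
    arg ((z + x) / (x * z + 1)) = arg (z + x) - arg (z + (x⁻¹ : ℝ)) := by
  have hx₀ : (x : ℂ) ≠ 0 := ofReal_ne_zero.2 hx.ne'
  have hscale : (z + x) / (x * z + 1) = (x⁻¹ : ℝ) * ((z + x) / (z + (x⁻¹ : ℝ))) := by
    rw [ofReal_inv, mul_div_assoc', inv_mul_eq_div, div_div, mul_add, mul_inv_cancel₀ hx₀]
  rw [hscale, arg_real_mul _ (inv_pos.2 hx)]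
  exact arg_div_of_im_pos (by simpa using hz) (by simpa using hz)

theorem strictAntiOn_arg_add_ofReal_div_ofReal_mul_add_one {z : ℂ} (hz : 0 < z.im) :
    StrictAntiOn (fun x : ℝ => arg ((z + x) / (x * z + 1))) (Ioi 0) := by
  intro x (hx : 0 < x) y (hy : 0 < y) hxy
  simp only [arg_add_ofReal_div_ofReal_mul_add_one hz hx,
    arg_add_ofReal_div_ofReal_mul_add_one hz hy]
  have hnear := strictAnti_arg_add_ofReal hz hxy
  have hfar := strictAnti_arg_add_ofReal hz ((inv_lt_inv₀ hy hx).2 hxy)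
  linarith

end Complex

theorem stmt_13 (t : ℝ) (ht : t ∈ Set.Ioo 0 Real.pi) :
    StrictAntiOn (fun x : ℝ =>
        Complex.arg ((Complex.exp (Complex.I * t) + x) / (x * Complex.exp (Complex.I * t) + 1)))
      (Set.Ioo 0 1) := by
  have him : 0 < (Complex.exp (Complex.I * t)).im := by
    rw [mul_comm, exp_ofReal_mul_I_im]
    exact Real.sin_pos_of_pos_of_lt_pi ht.1 ht.2
  exact (strictAntiOn_arg_add_ofReal_div_ofReal_mul_add_one him).mono Ioo_subset_Ioi_self
end

section
/- Fix t ∈ (0,π). Then the function b ↦ arg( (b − e^{it})/(b e^{it} − 1) ) is strictly increasing on the interval (0,1), where arg denotes the principal argument. -/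
/-!
For `b ∈ (-1, 1)` the point `w_b = (b - e^{it}) / (b e^{it} - 1)` lies on the unit circle, since
`|b e^{it} - 1| = |b - e^{-it}| = |b - e^{it}|`, and in the upper half plane, since
`Im w_b = (1 - b²) sin t / |b e^{it} - 1|²`. Hence `arg w_b = arccos (Re w_b)`, and it suffices that
`Re w_b = (cos t (b² + 1) - 2b) / (b² - 2b cos t + 1)` decreases strictly in `b`, which follows from
`Re w_a - Re w_b = 2 (b - a) (1 - a b) sin² t / ((a² - 2a cos t + 1) (b² - 2b cos t + 1))`.
-/

open Complex Real

lemma Real.sq_sub_two_mul_mul_cos_add_one_pos {t : ℝ} (hs : sin t ≠ 0) (b : ℝ) :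
    0 < b ^ 2 - 2 * b * cos t + 1 := by
  have : b ^ 2 - 2 * b * cos t + 1 = (b - cos t) ^ 2 + sin t ^ 2 := by
    linear_combination (sin_sq_add_cos_sq t).symm
  rw [this]
  positivity

lemma Real.strictAntiOn_cos_mul_sq_add_one_sub_div {t : ℝ} (hs : sin t ≠ 0) :
    StrictAntiOn (fun b : ℝ => (cos t * (b ^ 2 + 1) - 2 * b) / (b ^ 2 - 2 * b * cos t + 1))
      (Set.Ioo (-1) 1) := by
  intro a ha b hb hab
  have hDa := sq_sub_two_mul_mul_cos_add_one_pos hs a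
  have hDb := sq_sub_two_mul_mul_cos_add_one_pos hs b
  rw [div_lt_div_iff₀ hDb hDa, ← sub_pos]
  have hab' : 0 < 1 - a * b := by nlinarith [ha.1, ha.2, hb.1, hb.2]
  calc 0 < 2 * (b - a) * (1 - a * b) * sin t ^ 2 := by
        have := sub_pos.2 hab
        positivity
    _ = _ := by linear_combination (2 * (b - a) * (1 - a * b)) * Real.sin_sq_add_cos_sq t

namespace Complex

lemma exp_I_mul_ofReal_re (t : ℝ) : (exp (I * t)).re = Real.cos t := by
  rw [mul_comm, exp_ofReal_mul_I_re]

lemma exp_I_mul_ofReal_im (t : ℝ) : (exp (I * t)).im = Real.sin t := by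
  rw [mul_comm, exp_ofReal_mul_I_im]

variable (b t : ℝ)

lemma normSq_ofReal_mul_exp_sub_one :
    normSq (b * exp (I * t) - 1) = b ^ 2 - 2 * b * Real.cos t + 1 := by
  rw [normSq_apply]
  simp only [sub_re, sub_im, re_ofReal_mul, im_ofReal_mul, exp_I_mul_ofReal_re,
    exp_I_mul_ofReal_im, one_re, one_im]
  linear_combination b ^ 2 * Real.sin_sq_add_cos_sq t

lemma normSq_ofReal_sub_exp :
    normSq (b - exp (I * t)) = b ^ 2 - 2 * b * Real.cos t + 1 := by
  rw [normSq_apply]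
  simp only [sub_re, sub_im, ofReal_re, ofReal_im, exp_I_mul_ofReal_re, exp_I_mul_ofReal_im]
  linear_combination Real.sin_sq_add_cos_sq t

lemma re_ofReal_sub_exp_div :
    ((b - exp (I * t)) / (b * exp (I * t) - 1)).re =
      (Real.cos t * (b ^ 2 + 1) - 2 * b) / (b ^ 2 - 2 * b * Real.cos t + 1) := by
  rw [div_re, normSq_ofReal_mul_exp_sub_one, ← add_div]
  congr 1
  simp only [sub_re, sub_im, ofReal_re, ofReal_im, re_ofReal_mul, im_ofReal_mul,
    exp_I_mul_ofReal_re, exp_I_mul_ofReal_im, one_re, one_im]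
  linear_combination (-b) * Real.sin_sq_add_cos_sq t

lemma im_ofReal_sub_exp_div :
    ((b - exp (I * t)) / (b * exp (I * t) - 1)).im =
      (1 - b ^ 2) * Real.sin t / (b ^ 2 - 2 * b * Real.cos t + 1) := by
  rw [div_im, normSq_ofReal_mul_exp_sub_one, ← sub_div]
  simp only [sub_re, sub_im, ofReal_re, ofReal_im, re_ofReal_mul, im_ofReal_mul,
    exp_I_mul_ofReal_re, exp_I_mul_ofReal_im, one_re, one_im]
  ring

lemma im_ofReal_sub_exp_div_pos (hb : b ∈ Set.Ioo (-1) 1) (hs : 0 < Real.sin t) :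
    0 < ((b - exp (I * t)) / (b * exp (I * t) - 1)).im := by
  have hD := sq_sub_two_mul_mul_cos_add_one_pos hs.ne' b
  have hb2 : 0 < 1 - b ^ 2 := by nlinarith [hb.1, hb.2]
  rw [im_ofReal_sub_exp_div]
  positivity

lemma norm_ofReal_sub_exp_div (hs : Real.sin t ≠ 0) :
    ‖(b - exp (I * t)) / (b * exp (I * t) - 1)‖ = 1 := by
  rw [norm_div, norm_def, norm_def, normSq_ofReal_sub_exp, normSq_ofReal_mul_exp_sub_one,
    div_self (Real.sqrt_pos.2 (sq_sub_two_mul_mul_cos_add_one_pos hs b)).ne']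

end Complex

theorem stmt_14 (t : ℝ) (ht : t ∈ Set.Ioo 0 Real.pi) :
    StrictMonoOn (fun b : ℝ =>
        Complex.arg ((b - Complex.exp (Complex.I * t)) / (b * Complex.exp (Complex.I * t) - 1)))
      (Set.Ioo 0 1) := by
  set w : ℝ → ℂ := fun b => (b - exp (I * t)) / (b * exp (I * t) - 1)
  have hs : 0 < Real.sin t := sin_pos_of_pos_of_lt_pi ht.1 ht.2
  have hsub : Set.Ioo (0 : ℝ) 1 ⊆ Set.Ioo (-1) 1 := Set.Ioo_subset_Ioo_left (by norm_num)
  have hnorm (b : ℝ) : ‖w b‖ = 1 := norm_ofReal_sub_exp_div b t hs.ne'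
  have harg : ∀ b ∈ Set.Ioo (0 : ℝ) 1, arg (w b) = arccos (w b).re := fun b hb => by
    rw [arg_of_im_pos (im_ofReal_sub_exp_div_pos b t (hsub hb) hs), hnorm, div_one]
  have hre : StrictAntiOn (fun b => (w b).re) (Set.Ioo 0 1) := by
    simp only [w, re_ofReal_sub_exp_div]
    exact (strictAntiOn_cos_mul_sq_add_one_sub_div hs.ne').mono hsub
  have hmaps : Set.MapsTo (fun b => (w b).re) (Set.Ioo 0 1) (Set.Icc (-1) 1) :=
    fun b _ => abs_le.1 ((abs_re_le_norm (w b)).trans (hnorm b).le)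
  exact (strictAntiOn_arccos.comp hre hmaps).congr fun b hb => (harg b hb).symm
end

section
/- Let a ∈ (0,1) and t ∈ (0,π). Then Im( ( e^{it}(1 − a e^{it})/(e^{it} − a) )^{1/4} ) < 0, where w^{1/4} denotes the principal fourth power, defined via the principal branch of the argument in (−π, π]. -/
/-!
For `‖z‖ = 1` we have `z * conj (z - a) = 1 - a * z`, so the base equals
`(1 - a z)² / |z - a|²`. For `z = e^{it}` with `t ∈ (0, π)` the number `1 - a z` has positive real
and negative imaginary part, so its square lies in the open lower half-plane. Hence the principal
argument of the base lies in `(-π, 0)` and that of its principal fourth root in `(-π/4, 0)`.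
-/

open Complex Real
open scoped ComplexConjugate

namespace Complex

theorem im_cpow_ofReal_neg_of_im_neg {w : ℂ} (hw : w.im < 0) {r : ℝ} (hr₀ : 0 < r)
    (hr₁ : r ≤ 1) : (w ^ (r : ℂ)).im < 0 := by
  have hw₀ : w ≠ 0 := fun h ↦ by simp [h] at hw
  have harg : w.arg < 0 := arg_neg_iff.2 hw
  have hrarg : -π < r * w.arg := by nlinarith [neg_pi_lt_arg w]
  have him : (log w * r).im = r * w.arg := by simp [log_im, mul_comm]
  rw [cpow_def_of_ne_zero hw₀, exp_im, him]
  exact mul_neg_of_pos_of_neg (Real.exp_pos _)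
    (sin_neg_of_neg_of_neg_pi_lt (mul_neg_of_pos_of_neg hr₀ harg) hrarg)

theorem mul_one_sub_div_sub_eq_sq_div_normSq {z : ℂ} (hz : ‖z‖ = 1) (a : ℝ) :
    z * (1 - a * z) / (z - a) = (1 - a * z) ^ 2 / normSq (z - a) := by
  rcases eq_or_ne (z - a) 0 with h | h
  · simp [h]
  have hconj : z * conj z = 1 := by
    rw [mul_conj, normSq_eq_norm_sq, hz]
    simp
  rw [normSq_eq_conj_mul_self, div_eq_div_iff h (mul_ne_zero ((map_ne_zero _).2 h) h)]
  simp only [map_sub, conj_ofReal]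
  linear_combination (1 - a * z) * (z - a) * hconj

theorem im_mul_one_sub_div_sub_neg {z : ℂ} (hz : ‖z‖ = 1) (hz_im : 0 < z.im) {a : ℝ}
    (ha : a ∈ Set.Ioo (0 : ℝ) 1) : (z * (1 - a * z) / (z - a)).im < 0 := by
  have hden : 0 < normSq (z - a) := normSq_pos.2 fun h ↦ by
    have := congrArg im h
    simp at this
    linarith
  have hre : 0 < 1 - a * z.re := by nlinarith [(re_le_norm z).trans hz.le, ha.1, ha.2]
  have hsq : ((1 - a * z) ^ 2).im = -2 * (a * z.im) * (1 - a * z.re) := by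
    simp only [sq, mul_im, mul_re, sub_re, sub_im, one_re, one_im, ofReal_re, ofReal_im]
    ring
  rw [mul_one_sub_div_sub_eq_sq_div_normSq hz, div_ofReal_im, hsq]
  have := mul_pos (mul_pos ha.1 hz_im) hre
  exact div_neg_of_neg_of_pos (by linarith) hden

end Complex

theorem stmt_15 (a : ℝ) (ha : a ∈ Set.Ioo (0:ℝ) 1) (t : ℝ) (ht : t ∈ Set.Ioo 0 Real.pi) :
    ((Complex.exp (Complex.I * t) * (1 - a * Complex.exp (Complex.I * t)) /
        (Complex.exp (Complex.I * t) - a)) ^ ((1:ℂ)/4)).im < 0 := by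
  have hnorm : ‖exp (I * t)‖ = 1 := by
    rw [mul_comm]
    exact norm_exp_ofReal_mul_I t
  have him : 0 < (exp (I * t)).im := by
    rw [mul_comm, exp_ofReal_mul_I_im]
    exact sin_pos_of_pos_of_lt_pi ht.1 ht.2
  simpa using im_cpow_ofReal_neg_of_im_neg (im_mul_one_sub_div_sub_neg hnorm him ha)
    (r := 1 / 4) (by norm_num) (by norm_num)
end

section
/- For every x ∈ (0,1), the integral ∫₀^π Im( ((e^{it} + x)/(x e^{it} + 1))^{1/2} ) dt is strictly positive, where w^{1/2} denotes the principal square root, defined via the principal branch of the argument in (−π, π]. -/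
/-!
For `t ∈ (0, π)` the point `z = e^{it}` lies in the upper half plane, and the real Möbius map
`z ↦ (z + x) / (x z + 1)` with `x² < 1` keeps it there: the imaginary part of the image is
`Im z · (1 - x²) / |x z + 1|²`. The principal square root of a point of the open upper half plane
has argument in `(0, π/2)`, so the integrand is positive on `(0, π)`. It is also bounded by `1`,
since `|e^{it} + x| = |x e^{it} + 1|`, hence integrable, and its integral is positive.
-/

open Complex Real ComplexConjugate

namespace Complex

theorem arg_pos_of_im_pos {w : ℂ} (hw : 0 < w.im) : 0 < w.arg :=
  (arg_nonneg_iff.2 hw.le).lt_of_ne' fun h => hw.ne' (arg_eq_zero_iff.1 h).2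

theorem im_cpow_half_pos {w : ℂ} (hw : 0 < w.im) : 0 < (w ^ (1 / 2 : ℂ)).im := by
  have hw0 : w ≠ 0 := fun h => by simp [h] at hw
  have harg : (log w * (1 / 2)).im = w.arg / 2 := by
    rw [mul_im, log_im]
    norm_num
    ring
  rw [cpow_def_of_ne_zero hw0, exp_im, harg]
  refine mul_pos (Real.exp_pos _) (Real.sin_pos_of_pos_of_lt_pi ?_ ?_)
  · linarith [arg_pos_of_im_pos hw]
  · linarith [arg_le_pi w, Real.pi_pos]

theorem norm_cpow_half_le_one {w : ℂ} (hw : ‖w‖ ≤ 1) : ‖w ^ (1 / 2 : ℂ)‖ ≤ 1 := by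
  have : (1 / 2 : ℂ) = ((1 / 2 : ℝ) : ℂ) := by push_cast; rfl
  rw [this, norm_cpow_real]
  exact Real.rpow_le_one (norm_nonneg w) hw (by norm_num)

theorem im_add_ofReal_div_pos {z : ℂ} {x : ℝ} (hz : 0 < z.im) (hx : x ^ 2 < 1) :
    0 < ((z + x) / (x * z + 1)).im := by
  have hden : x * z + 1 ≠ 0 := fun h => by
    have him : x * z.im = 0 := by simpa using congrArg im h
    have hx0 : x = 0 := (mul_eq_zero.1 him).resolve_right hz.ne'
    simp [hx0] at h
  have him : ((z + x) / (x * z + 1)).im = z.im * (1 - x ^ 2) / normSq (x * z + 1) := by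
    rw [div_im]
    simp only [add_im, ofReal_im, add_zero, add_re, mul_re, ofReal_re, zero_mul, sub_zero, one_re,
      mul_im, one_im]
    field_simp
    ring
  rw [him]
  exact div_pos (mul_pos hz (by linarith)) (normSq_pos.2 hden)

theorem norm_add_ofReal_eq_norm_ofReal_mul_add_one {z : ℂ} (hz : ‖z‖ = 1) (x : ℝ) :
    ‖z + x‖ = ‖x * z + 1‖ := by
  have hzz : z * conj z = 1 := by rw [mul_conj, normSq_eq_norm_sq, hz]; simp
  have : z + x = z * conj (x * z + 1) := by
    simp only [map_add, map_mul, conj_ofReal, map_one]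
    linear_combination (-(x : ℂ)) * hzz
  rw [this, norm_mul, hz, norm_conj, one_mul]

end Complex

theorem intervalIntegrable_im_cpow_half {g : ℝ → ℂ} (hg : Measurable g) (hg1 : ∀ t, ‖g t‖ ≤ 1)
    (a b : ℝ) : IntervalIntegrable (fun t => (g t ^ (1 / 2 : ℂ)).im) MeasureTheory.volume a b :=
  intervalIntegrable_const.mono_fun'
    (Complex.measurable_im.comp (hg.pow_const _)).aestronglyMeasurable
    (Filter.Eventually.of_forall fun t =>
      (Complex.abs_im_le_norm _).trans (Complex.norm_cpow_half_le_one (hg1 t)))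

theorem stmt_16 (x : ℝ) (hx : x ∈ Set.Ioo (0:ℝ) 1) :
    0 < ∫ t in (0:ℝ)..Real.pi,
        (((Complex.exp (Complex.I * t) + x) /
          (x * Complex.exp (Complex.I * t) + 1)) ^ ((1:ℂ)/2)).im := by
  obtain ⟨hx0, hx1⟩ := hx
  have hcircle (t : ℝ) : ‖Complex.exp (Complex.I * t)‖ = 1 := by
    rw [mul_comm, Complex.norm_exp_ofReal_mul_I]
  refine intervalIntegral.intervalIntegral_pos_of_pos_on
    (intervalIntegrable_im_cpow_half (by fun_prop) (fun t => ?_) _ _) (fun t ht => ?_) Real.pi_pos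
  · rw [norm_div, Complex.norm_add_ofReal_eq_norm_ofReal_mul_add_one (hcircle t)]
    exact div_self_le_one _
  · refine Complex.im_cpow_half_pos (Complex.im_add_ofReal_div_pos ?_ (by nlinarith))
    rw [mul_comm, Complex.exp_ofReal_mul_I_im]
    exact Real.sin_pos_of_pos_of_lt_pi ht.1 ht.2
end

section
/- Let u be a complex number with u ≠ 1, and for parameters (a,b,x) set z = a·u/(u − 1) and F(z) = z·((1−az)/(z−a))·((b−z)/(bz−1))²·((z+x)/(xz+1))². Then F(a·u/(u−1)) tends to u as (a,b,x) tends to (0,1,1) within the open cube (0,1)³. -/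
open Complex Filter Topology

/-! On the curve `z = a u / (u - 1)` we have `z - a = a / (u - 1)`, so the factor `z / (z - a)`
of `F`, an indeterminate `0 / 0` in the limit, is identically `u` for `a ≠ 0`. What remains of `F`
is continuous at `(a, b, x, z) = (0, 1, 1, 0)`, where it equals `1`. -/

/-- The fourth power of the Gauss map, equation (1) of the paper. -/
noncomputable def F (a b x : ℝ) (z : ℂ) : ℂ :=
  z * ((1 - a*z)/(z - a)) * ((b - z)/(b*z - 1))^2 * ((z + x)/(x*z + 1))^2

noncomputable def cofactor (a b x : ℝ) (z : ℂ) : ℂ :=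
  (1 - a*z) * ((b - z)/(b*z - 1))^2 * ((z + x)/(x*z + 1))^2

theorem F_eq_div_mul_cofactor (a b x : ℝ) (z : ℂ) :
    F a b x z = z / (z - a) * cofactor a b x z := by
  unfold F cofactor
  ring

theorem cofactor_zero_one_one : cofactor 0 1 1 0 = 1 := by
  norm_num [cofactor]

theorem continuousAt_cofactor {p : ℝ × ℝ × ℝ} {z : ℂ}
    (hb : (p.2.1 : ℂ) * z - 1 ≠ 0) (hx : (p.2.2 : ℂ) * z + 1 ≠ 0) :
    ContinuousAt (fun q : (ℝ × ℝ × ℝ) × ℂ => cofactor q.1.1 q.1.2.1 q.1.2.2 q.2) (p, z) := by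
  unfold cofactor
  fun_prop (disch := assumption)

theorem mul_div_sub_one_div_sub_self {a u : ℂ} (ha : a ≠ 0) (hu : u ≠ 1) :
    a * u / (u - 1) / (a * u / (u - 1) - a) = u := by
  have hu1 : u - 1 ≠ 0 := sub_ne_zero.mpr hu
  field_simp
  ring

theorem stmt_19 (u : ℂ) (hu : u ≠ 1) :
    Filter.Tendsto (fun p : ℝ × ℝ × ℝ => F p.1 p.2.1 p.2.2 ((p.1 : ℂ) * u / (u - 1)))
      (𝓝[Set.Ioo (0:ℝ) 1 ×ˢ Set.Ioo (0:ℝ) 1 ×ˢ Set.Ioo (0:ℝ) 1] (0, 1, 1))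
      (𝓝 u) := by
  set z : ℝ × ℝ × ℝ → ℂ := fun p => (p.1 : ℂ) * u / (u - 1)
  have hz : Tendsto (fun p => (p, z p)) (𝓝 ((0, 1, 1) : ℝ × ℝ × ℝ))
      (𝓝 (((0, 1, 1), 0) : (ℝ × ℝ × ℝ) × ℂ)) :=
    (continuous_id.prodMk (by fun_prop : Continuous z)).tendsto' _ _ (by simp [z])
  have hcofactor : Tendsto (fun p => cofactor p.1 p.2.1 p.2.2 (z p))
      (𝓝 ((0, 1, 1) : ℝ × ℝ × ℝ)) (𝓝 1) := by
    have h := (continuousAt_cofactor (p := (0, 1, 1)) (z := 0) (by norm_num) (by norm_num)).tendsto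
    simpa only [cofactor_zero_one_one, Function.comp_def] using h.comp hz
  have hF : ∀ᶠ p in 𝓝[Set.Ioo (0:ℝ) 1 ×ˢ Set.Ioo (0:ℝ) 1 ×ˢ Set.Ioo (0:ℝ) 1] (0, 1, 1),
      u * cofactor p.1 p.2.1 p.2.2 (z p) = F p.1 p.2.1 p.2.2 (z p) := by
    filter_upwards [self_mem_nhdsWithin] with p ⟨ha, _⟩
    rw [F_eq_div_mul_cofactor, mul_div_sub_one_div_sub_self (by exact_mod_cast ha.1.ne') hu]
  simpa only [mul_one] using ((hcofactor.mono_left nhdsWithin_le_nhds).const_mul u).congr' hF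
end
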